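/- Let ℳ = {A_1,…,A_p} be a set of D×D real matrices such that: (i) for every infinite sequence (i) = (i_1, i_2, …) ∈ {1,…,p}^∞ the products A_{i_n}⋯A_{i_1} converge as n → ∞ to a limit matrix A_{(i)}; and (ii) there is a sequence (ε_n)_n of positive numbers with ε_n → 0 such that ‖A_{(i)} − A_{i_n}⋯A_{i_1}‖ ≤ ε_n for every sequence (i) and every n ≥ 1. Then, for every nonempty compact K_0 ⊆ ℝ^D, the sequence (H^n(K_0))_n converges in the Hausdorff metric to the set L = cl(⋃_{(i) ∈ {1,…,p}^∞} A_{(i)}(K_0)). -/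

import Mathlib

/-!
`H^n(K₀)` is the union of the images `A_{i_n} ⋯ A_{i_1}(K₀)` over all index sequences, and `L` is
the closure of the union of the images `A_{(i)}(K₀)` over the same sequences. Matching each point
`A_{i_n} ⋯ A_{i_1} x` with `A_{(i)} x` moves it by at most `ε_n ‖x‖`, so the Hausdorff distance
is at most `ε_n · sup_{x ∈ K₀} ‖x‖ → 0`.
-/

open Metric Filter Pointwise Topology

noncomputable section

/-- The Hutchinson operator `H(K) = ⋃ i, f i '' K`. -/
def hutch {D p : ℕ} (f : Fin (p + 1) → EuclideanSpace ℝ (Fin D) → EuclideanSpace ℝ (Fin D))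
    (K : Set (EuclideanSpace ℝ (Fin D))) : Set (EuclideanSpace ℝ (Fin D)) := ⋃ i, f i '' K

/-- The left product `A_{i_n} ⋯ A_{i_1}` along the first `n` terms of the sequence `(i)`. -/
def wprod {D p : ℕ} (A : Fin (p + 1) → EuclideanSpace ℝ (Fin D) →L[ℝ] EuclideanSpace ℝ (Fin D))
    (seq : ℕ → Fin (p + 1)) (n : ℕ) : EuclideanSpace ℝ (Fin D) →L[ℝ] EuclideanSpace ℝ (Fin D) :=
  ((List.ofFn fun j : Fin n => A (seq j)).reverse).prod

theorem Metric.hausdorffDist_iUnion_image_le {ι α β : Type*} [PseudoMetricSpace β]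
    (g h : ι → α → β) (K : Set α) {r : ℝ} (hr : 0 ≤ r)
    (hgh : ∀ i, ∀ x ∈ K, dist (g i x) (h i x) ≤ r) :
    hausdorffDist (⋃ i, g i '' K) (⋃ i, h i '' K) ≤ r := by
  apply hausdorffDist_le_of_mem_dist hr
  · rintro _ ⟨_, ⟨i, rfl⟩, x, hx, rfl⟩
    exact ⟨h i x, Set.mem_iUnion_of_mem i (Set.mem_image_of_mem _ hx), hgh i x hx⟩
  · rintro _ ⟨_, ⟨i, rfl⟩, x, hx, rfl⟩
    exact ⟨g i x, Set.mem_iUnion_of_mem i (Set.mem_image_of_mem _ hx),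
      dist_comm (g i x) _ ▸ hgh i x hx⟩

section Products

variable {D p : ℕ} (A : Fin (p + 1) → EuclideanSpace ℝ (Fin D) →L[ℝ] EuclideanSpace ℝ (Fin D))

@[simp]
theorem wprod_zero (seq : ℕ → Fin (p + 1)) : wprod A seq 0 = 1 := by
  simp [wprod]

theorem wprod_succ (seq : ℕ → Fin (p + 1)) (n : ℕ) :
    wprod A seq (n + 1) = A (seq n) * wprod A seq n := by
  rw [wprod, wprod, List.ofFn_succ']
  simp

theorem wprod_congr {seq seq' : ℕ → Fin (p + 1)} {n : ℕ} (h : ∀ j < n, seq j = seq' j) :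
    wprod A seq n = wprod A seq' n := by
  have hA : (fun j : Fin n => A (seq j)) = fun j : Fin n => A (seq' j) :=
    funext fun j => by rw [h j j.2]
  rw [wprod, hA, wprod]

theorem hutch_iterate_eq_iUnion_wprod (K : Set (EuclideanSpace ℝ (Fin D))) (n : ℕ) :
    (hutch fun i => ⇑(A i))^[n] K = ⋃ seq : ℕ → Fin (p + 1), wprod A seq n '' K := by
  induction n with
  | zero => simpa using (Set.iUnion_const K).symm
  | succ n ih =>
    rw [Function.iterate_succ_apply', ih]
    ext x
    simp only [hutch, Set.mem_iUnion, Set.mem_image, wprod_succ]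
    constructor
    · rintro ⟨i, _, ⟨seq, y, hy, rfl⟩, rfl⟩
      refine ⟨fun j => if j < n then seq j else i, y, hy, ?_⟩
      rw [wprod_congr A (seq' := seq) fun j hj => if_pos hj]
      simp
    · rintro ⟨seq, y, hy, rfl⟩
      exact ⟨seq n, _, ⟨seq, y, hy, rfl⟩, rfl⟩

end Products

theorem stmt9_general {D p : ℕ}
    (A : Fin (p + 1) → EuclideanSpace ℝ (Fin D) →L[ℝ] EuclideanSpace ℝ (Fin D))
    (f : Fin (p + 1) → EuclideanSpace ℝ (Fin D) → EuclideanSpace ℝ (Fin D))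
    (hf : ∀ i x, f i x = A i x)
    (Alim : (ℕ → Fin (p + 1)) → EuclideanSpace ℝ (Fin D) →L[ℝ] EuclideanSpace ℝ (Fin D))
    (ε : ℕ → ℝ) (hε : Tendsto ε atTop (𝓝 0))
    (hunif : ∀ (seq : ℕ → Fin (p + 1)) (n : ℕ), 1 ≤ n → ‖Alim seq - wprod A seq n‖ ≤ ε n)
    (K₀ : Set (EuclideanSpace ℝ (Fin D))) (hK₀c : IsCompact K₀) :
    Tendsto (fun n => hausdorffDist ((hutch f)^[n] K₀)
      (closure (⋃ seq : ℕ → Fin (p + 1), (Alim seq) '' K₀))) atTop (𝓝 0) := by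
  obtain rfl : f = fun i => ⇑(A i) := funext fun i => funext (hf i)
  obtain ⟨C, hC0, hC⟩ := hK₀c.isBounded.exists_pos_norm_le
  have hbound : ∀ n, 1 ≤ n → hausdorffDist ((hutch fun i => ⇑(A i))^[n] K₀)
      (closure (⋃ seq : ℕ → Fin (p + 1), (Alim seq) '' K₀)) ≤ ε n * C := by
    intro n hn
    rw [hutch_iterate_eq_iUnion_wprod, hausdorffDist_closure₂]
    have hε_nonneg : 0 ≤ ε n := (norm_nonneg _).trans (hunif (fun _ => 0) n hn)
    refine hausdorffDist_iUnion_image_le _ _ _ (by positivity) fun seq x hx => ?_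
    calc dist (wprod A seq n x) (Alim seq x) = ‖(Alim seq - wprod A seq n) x‖ := by
          rw [dist_comm, dist_eq_norm]; rfl
      _ ≤ ‖Alim seq - wprod A seq n‖ * ‖x‖ := ContinuousLinearMap.le_opNorm _ x
      _ ≤ ε n * C := mul_le_mul (hunif seq n hn) (hC x hx)
          (norm_nonneg x) hε_nonneg
  refine squeeze_zero' (Eventually.of_forall fun n => hausdorffDist_nonneg) ?_
    (by simpa using hε.mul_const C)
  filter_upwards [eventually_ge_atTop 1] with n hn
  exact hbound n hn

/-- Lemma `lem:cvglcp`. If `ℳ = {A_1, …, A_p}` is an LCP set whose products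
converge uniformly (with rate `ε_n → 0`), then for every nonempty compact `K₀` the orbit
`(H^n(K₀))_n` converges in the Hausdorff metric to
`L = cl(⋃_{(i)} A_{(i)}(K₀))`. -/
theorem stmt9 {D p : ℕ}
    (A : Fin (p + 1) → EuclideanSpace ℝ (Fin D) →L[ℝ] EuclideanSpace ℝ (Fin D))
    (f : Fin (p + 1) → EuclideanSpace ℝ (Fin D) → EuclideanSpace ℝ (Fin D))
    (hf : ∀ i x, f i x = A i x)
    (Alim : (ℕ → Fin (p + 1)) → EuclideanSpace ℝ (Fin D) →L[ℝ] EuclideanSpace ℝ (Fin D))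
    (hLCP : ∀ seq : ℕ → Fin (p + 1), Tendsto (wprod A seq) atTop (𝓝 (Alim seq)))
    (ε : ℕ → ℝ) (hεpos : ∀ n, 0 < ε n) (hε : Tendsto ε atTop (𝓝 0))
    (hunif : ∀ (seq : ℕ → Fin (p + 1)) (n : ℕ), 1 ≤ n → ‖Alim seq - wprod A seq n‖ ≤ ε n)
    (K₀ : Set (EuclideanSpace ℝ (Fin D))) (hK₀c : IsCompact K₀) (hK₀ne : K₀.Nonempty) :
    Tendsto (fun n => hausdorffDist ((hutch f)^[n] K₀)
      (closure (⋃ seq : ℕ → Fin (p + 1), (Alim seq) '' K₀))) atTop (𝓝 0) :=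
  stmt9_general A f hf Alim ε hε hunif K₀ hK₀c
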